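/- Let H be a hyperplane of the k-Grassmannian of V whose lower radical R_↓(H) is nonempty, corresponding to the nonzero radical R of the defining alternating k-linear form φ. Let S be a complement of R in V. Then H equals the trivial extension of H(S) by R, where H(S) is the set of k-subspaces of S in H; i.e., a k-subspace X of V lies in H if and only if X ∩ R ≠ 0 or the projection of X to S (along R) lies in H(S). -/

import Mathlib

open Module

/-!
An argument in the radical `R` kills `φ`, so by multilinearity `φ` is unchanged when every
argument is replaced by its projection to `S` along `R`; hence `φ` vanishes on `X` iff it vanishes
on the projection of `X`. If moreover `X ∩ R ≠ 0`, that projection has dimension less than `k`, so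
every `k`-tuple in it is linearly dependent and `φ` vanishes on `X` anyway.
-/

namespace AlternatingMap

section CommRing

variable {A M N ι : Type*} [CommRing A] [AddCommGroup M] [Module A M] [AddCommGroup N] [Module A N]

/-- For a `k`-subspace `X`, this is the paper's `X ∈ H`. -/
def VanishesOn (φ : M [⋀^ι]→ₗ[A] N) (X : Submodule A M) : Prop :=
  ∀ v : ι → M, (∀ i, v i ∈ X) → φ v = 0

theorem vanishesOn_map_iff {M' : Type*} [AddCommGroup M'] [Module A M']
    (φ : M' [⋀^ι]→ₗ[A] N) (f : M →ₗ[A] M') (X : Submodule A M) :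
    φ.VanishesOn (X.map f) ↔ (φ.compLinearMap f).VanishesOn X := by
  refine ⟨fun h v hv ↦ h _ fun i ↦ Submodule.mem_map_of_mem (hv i), fun h w hw ↦ ?_⟩
  choose v hvX hvw using fun i ↦ Submodule.mem_map.mp (hw i)
  obtain rfl : f ∘ v = w := funext hvw
  exact h v hvX

theorem map_eq_zero_of_mem_of_forall_snoc {m : ℕ} (φ : M [⋀^Fin (m + 1)]→ₗ[A] N)
    {W : Submodule A M} (hW : ∀ x ∈ W, ∀ v : Fin m → M, φ (Fin.snoc v x) = 0)
    (v : Fin (m + 1) → M) (j : Fin (m + 1)) (hj : v j ∈ W) : φ v = 0 := by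
  have hlast : ∀ u : Fin (m + 1) → M, u (Fin.last m) ∈ W → φ u = 0 := fun u hu ↦ by
    simpa only [Fin.snoc_init_self] using hW _ hu (Fin.init u)
  rcases eq_or_ne j (Fin.last m) with rfl | hne
  · exact hlast v hj
  · rw [← neg_eq_zero, ← φ.map_swap v hne]
    exact hlast _ (by simpa only [Function.comp_apply, Equiv.swap_apply_right])

theorem map_add_of_forall_mem [Fintype ι] (φ : M [⋀^ι]→ₗ[A] N) {W : Submodule A M}
    (hW : ∀ v j, v j ∈ W → φ v = 0) (v w : ι → M) (hw : ∀ i, w i ∈ W) : φ (v + w) = φ v := by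
  classical
  rw [φ.map_add_univ, Finset.sum_eq_single Finset.univ, Finset.piecewise_univ]
  · intro s _ hs
    obtain ⟨j, hj⟩ : ∃ j, j ∉ s := by simpa [Finset.eq_univ_iff_forall] using hs
    exact hW _ j (by simpa [Finset.piecewise_eq_of_notMem _ _ _ hj] using hw j)
  · simp

theorem compLinearMap_projection [Fintype ι] (φ : M [⋀^ι]→ₗ[A] N) {W S : Submodule A M}
    (hW : ∀ v j, v j ∈ W → φ v = 0) (h : IsCompl S W) :
    φ.compLinearMap (S.projection W h) = φ := by
  ext v
  rw [compLinearMap_apply, ← φ.map_add_of_forall_mem hW _ (fun i ↦ v i - S.projection W h (v i))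
    fun i ↦ Submodule.sub_projection_mem h (v i)]
  congr 1
  ext i
  simp

end CommRing

theorem vanishesOn_of_finrank_lt {K V N ι : Type*} [Field K] [AddCommGroup V] [Module K V]
    [AddCommGroup N] [Module K N] [Fintype ι] (φ : V [⋀^ι]→ₗ[K] N) (U : Submodule K V)
    [FiniteDimensional K U] (hU : finrank K U < Fintype.card ι) : φ.VanishesOn U := by
  intro v hv
  refine φ.map_linearDependent v fun hind ↦ hU.not_ge ?_
  have : LinearIndependent K fun i ↦ (⟨v i, hv i⟩ : U) := .of_comp U.subtype hind
  exact this.fintype_card_le_finrank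

end AlternatingMap

theorem Submodule.finrank_map_lt_of_inf_ker_ne_bot {K V V' : Type*} [Field K] [AddCommGroup V]
    [Module K V] [AddCommGroup V'] [Module K V'] (f : V →ₗ[K] V') (X : Submodule K V)
    [FiniteDimensional K X] (hX : X ⊓ LinearMap.ker f ≠ ⊥) : finrank K (X.map f) < finrank K X := by
  have hker : LinearMap.ker (f.domRestrict X) ≠ ⊥ := by
    rwa [LinearMap.ker_domRestrict, Ne, ← Submodule.disjoint_iff_comap_eq_bot, disjoint_iff]
  rw [← LinearMap.range_domRestrict, ← (f.domRestrict X).finrank_range_add_finrank_ker,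
    lt_add_iff_pos_right, Nat.pos_iff_ne_zero, Ne, Submodule.finrank_eq_zero]
  exact hker

theorem stmt_9_general (K V : Type*) [Field K] [AddCommGroup V] [Module K V] [FiniteDimensional K V]
    (m : ℕ)
    (φ : AlternatingMap K V K (Fin (m + 1)))
    (R : Submodule K V)
    (hR : ∀ x : V, x ∈ R ↔ ∀ v : Fin m → V, φ (Fin.snoc v x) = 0)
    (S : Submodule K V) (hcompl : IsCompl R S)
    (X : Submodule K V) (hX : finrank K X = m + 1) :
    (∀ v : Fin (m + 1) → V, (∀ i, v i ∈ X) → φ v = 0) ↔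
      (X ⊓ R ≠ ⊥ ∨
        ∀ v : Fin (m + 1) → V,
          (∀ i, v i ∈ X.map
            (S.subtype ∘ₗ Submodule.linearProjOfIsCompl S R hcompl.symm)) → φ v = 0) := by
  change φ.VanishesOn X ↔ X ⊓ R ≠ ⊥ ∨ φ.VanishesOn (X.map (S.projection R hcompl.symm))
  have hπ : φ.compLinearMap (S.projection R hcompl.symm) = φ :=
    φ.compLinearMap_projection (φ.map_eq_zero_of_mem_of_forall_snoc fun x hx ↦ (hR x).mp hx)
      hcompl.symm
  rw [AlternatingMap.vanishesOn_map_iff, hπ]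
  refine ⟨Or.inr, fun h ↦ h.elim (fun hXR ↦ ?_) id⟩
  rw [← hπ, ← AlternatingMap.vanishesOn_map_iff]
  refine φ.vanishesOn_of_finrank_lt _ ?_
  calc finrank K (X.map (S.projection R hcompl.symm)) < finrank K X :=
        Submodule.finrank_map_lt_of_inf_ker_ne_bot _ X (by rwa [Submodule.ker_projection])
    _ = Fintype.card (Fin (m + 1)) := by rw [hX, Fintype.card_fin]

/-- If the radical `R` of the nontrivial alternating `k`-form `φ` (`k = m + 1 ≥ 3`) defining a
hyperplane `H` is nonzero and `S` is a complement of `R` in `V`, then `H` is the trivial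
extension of `H(S)` by `R`: a `k`-subspace `X` lies in `H` iff `X ∩ R ≠ 0` or `φ` vanishes
identically on the projection of `X` to `S` along `R`. -/
theorem stmt_9 (K V : Type*) [Field K] [AddCommGroup V] [Module K V] [FiniteDimensional K V]
    (n m : ℕ) (hn : finrank K V = n) (hm : 2 ≤ m) (hmn : m + 1 < n)
    (φ : AlternatingMap K V K (Fin (m + 1))) (hφ : φ ≠ 0)
    (R : Submodule K V)
    (hR : ∀ x : V, x ∈ R ↔ ∀ v : Fin m → V, φ (Fin.snoc v x) = 0)
    (hRne : R ≠ ⊥)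
    (S : Submodule K V) (hcompl : IsCompl R S)
    (X : Submodule K V) (hX : finrank K X = m + 1) :
    (∀ v : Fin (m + 1) → V, (∀ i, v i ∈ X) → φ v = 0) ↔
      (X ⊓ R ≠ ⊥ ∨
        ∀ v : Fin (m + 1) → V,
          (∀ i, v i ∈ X.map
            (S.subtype ∘ₗ Submodule.linearProjOfIsCompl S R hcompl.symm)) → φ v = 0) :=
  stmt_9_general K V m φ R hR S hcompl X hX
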